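/- arXiv:2004.09935 — 3 statements merged into one kernel-verified Lean document; each statement's English description precedes it below -/
import Mathlib

section
/- Let P_X and Q_X be two probability distributions on a finite product 𝒳^q such that the induced marginals satisfy P_{X_i} = Q_{X_i} for all i = 1,…,q, Q_X = Π_{i=1}^q Q_{X_i} is a product distribution, and P_X is absolutely continuous with respect to Q_X. Let A be any streaming algorithm on 𝒳^q, and for i ∈ [q] let Σ_i = Σ_i(X_1,…,X_i) denote the state produced at step i (with Σ_0 constant). Then D_KL(P_A‖Q_A) ≤ Σ_{i=1}^{q} D_KL(P_{X_i|Σ_{i−1}} ‖ P_{X_i} | P_{Σ_{i−1}}) = Σ_{i=1}^{q} I(X_i; Σ_{i−1}), where the mutual information is computed with respect to the joint distribution of (X_i, Σ_{i−1}) induced by P_X. -/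
/-!
Write `Σ_k` for the state after `k` symbols. As `Σ_{i+1}` is a function of `(Σ_i, X_i)`, data
processing bounds `D(P_{Σ_{i+1}} ‖ Q_{Σ_{i+1}})` by the divergence between the laws of this pair.
Under the product measure `Q`, `X_i` is independent of `Σ_i` (which only reads earlier symbols) and
has the same law as under `P`, so the chain rule splits that divergence into
`I(X_i; Σ_i) + D(P_{Σ_i} ‖ Q_{Σ_i})`. Induction from the constant `Σ_0` gives the bound, and
the conditional divergence equals the mutual information term by term.
-/

open scoped Classical

/-- The sequence of internal states of a streaming algorithm `A` on alphabet `𝒳`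
processing the input `x = (x_1, …, x_q) ∈ 𝒳^q`: the state `σ_0` is the empty
string, and `σ_i = A(i, σ_{i-1}, x_i)` for `i = 1, …, q`.  (With `0`-based
indexing of the input, the state after `k` processed symbols is `streamRun A x k`,
and the symbol consumed at step `k+1` is `x k`.) -/
def streamRun {𝒳 : Type*} {q : ℕ} (A : ℕ → List Bool → 𝒳 → List Bool)
    (x : Fin q → 𝒳) : ℕ → List Bool
  | 0 => []
  | (i + 1) =>
      if h : i < q then A (i + 1) (streamRun A x i) (x ⟨i, h⟩) else streamRun A x i

/-- The distribution of the output `A(X) = σ_q` of the streaming algorithm `A`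
when the input `X ∈ 𝒳^q` is distributed according to `μ`. -/
noncomputable def outDist {𝒳 : Type*} [Fintype 𝒳] {q : ℕ}
    (A : ℕ → List Bool → 𝒳 → List Bool) (μ : (Fin q → 𝒳) → ℝ) : List Bool → ℝ :=
  fun σ => ∑ x : Fin q → 𝒳, if streamRun A x q = σ then μ x else 0

/-- Kullback–Leibler divergence (natural logarithm). -/
noncomputable def klDiv {α : Type*} (p q : α → ℝ) : ℝ :=
  ∑' a, p a * Real.log (p a / q a)

/-- The marginal distribution `P_{X_i}` of the `i`-th coordinate under `P`. -/
noncomputable def margX {𝒳 : Type*} [Fintype 𝒳] {q : ℕ}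
    (P : (Fin q → 𝒳) → ℝ) (i : Fin q) (a : 𝒳) : ℝ :=
  ∑ x : Fin q → 𝒳, if x i = a then P x else 0

/-- The distribution `P_{Σ_{i-1}}` of the state `Σ_{i-1}` just before the
`i`-th symbol `X_i` is consumed (under `P`). -/
noncomputable def margS {𝒳 : Type*} [Fintype 𝒳] {q : ℕ}
    (A : ℕ → List Bool → 𝒳 → List Bool) (P : (Fin q → 𝒳) → ℝ) (i : Fin q)
    (σ : List Bool) : ℝ :=
  ∑ x : Fin q → 𝒳, if streamRun A x i.1 = σ then P x else 0

/-- The joint distribution `P_{X_i Σ_{i-1}}` of `(X_i, Σ_{i-1})` induced by `P`. -/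
noncomputable def jointXS {𝒳 : Type*} [Fintype 𝒳] {q : ℕ}
    (A : ℕ → List Bool → 𝒳 → List Bool) (P : (Fin q → 𝒳) → ℝ) (i : Fin q)
    (a : 𝒳) (σ : List Bool) : ℝ :=
  ∑ x : Fin q → 𝒳, if x i = a ∧ streamRun A x i.1 = σ then P x else 0

/-- The conditional divergence `D_KL(P_{X_i | Σ_{i-1}} ‖ P_{X_i} | P_{Σ_{i-1}})
= Σ_σ P_{Σ_{i-1}}(σ) · D_KL(P_{X_i | Σ_{i-1} = σ} ‖ P_{X_i})`. -/
noncomputable def condDiv {𝒳 : Type*} [Fintype 𝒳] {q : ℕ}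
    (A : ℕ → List Bool → 𝒳 → List Bool) (P : (Fin q → 𝒳) → ℝ) (i : Fin q) : ℝ :=
  ∑' σ : List Bool, margS A P i σ *
    ∑ a : 𝒳, (jointXS A P i a σ / margS A P i σ) *
      Real.log ((jointXS A P i a σ / margS A P i σ) / margX P i a)

/-- The mutual information `I(X_i; Σ_{i-1})` computed with respect to the joint
distribution `P_{X_i Σ_{i-1}}` induced by `P` (natural logarithm). -/
noncomputable def miXS {𝒳 : Type*} [Fintype 𝒳] {q : ℕ}
    (A : ℕ → List Bool → 𝒳 → List Bool) (P : (Fin q → 𝒳) → ℝ) (i : Fin q) : ℝ :=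
  ∑' σ : List Bool, ∑ a : 𝒳, jointXS A P i a σ *
    Real.log (jointXS A P i a σ / (margX P i a * margS A P i σ))

open Finset Function Real

section Pushforward

variable {α β γ : Type*} [Fintype α]

noncomputable def pushforward (f : α → β) (μ : α → ℝ) (b : β) : ℝ :=
  ∑ x, if f x = b then μ x else 0

variable {f : α → β} {μ ν : α → ℝ}

lemma pushforward_nonneg (hμ : ∀ x, 0 ≤ μ x) (b : β) : 0 ≤ pushforward f μ b :=
  sum_nonneg fun x _ => ite_nonneg (hμ x) le_rfl

lemma le_pushforward_apply (hμ : ∀ x, 0 ≤ μ x) (x : α) : μ x ≤ pushforward f μ (f x) := by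
  simpa [pushforward] using single_le_sum (f := fun y => if f y = f x then μ y else 0)
    (fun y _ => ite_nonneg (hμ y) le_rfl) (mem_univ x)

lemma pushforward_eq_zero_of_absCont (hν : ∀ x, 0 ≤ ν x) (hac : ∀ x, ν x = 0 → μ x = 0)
    {b : β} (h : pushforward f ν b = 0) : pushforward f μ b = 0 :=
  sum_eq_zero fun x _ => by
    split_ifs with hx
    · subst hx
      exact hac x (le_antisymm (h ▸ le_pushforward_apply hν x) (hν x))
    · rfl

lemma support_pushforward_subset : support (pushforward f μ) ⊆ univ.image f := by
  intro b hb
  by_contra h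
  exact hb (sum_eq_zero fun x _ => if_neg fun hx => h (by simp [← hx]))

lemma sum_pushforward [Fintype β] : ∑ b, pushforward f μ b = ∑ x, μ x := by
  simp only [pushforward]
  rw [sum_comm]
  simp

lemma tsum_pushforward_mul (g : β → ℝ) :
    ∑' b, pushforward f μ b * g b = ∑ x, μ x * g (f x) := by
  rw [tsum_eq_sum (s := univ.image f) fun b hb => by
    rw [notMem_support.mp fun h => hb (support_pushforward_subset h), zero_mul]]
  simp only [pushforward, sum_mul, ite_mul, zero_mul]
  rw [sum_comm]
  refine sum_congr rfl fun x _ => ?_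
  rw [sum_ite_eq]
  simp

lemma summable_pushforward_mul (g : β → ℝ) : Summable fun b => pushforward f μ b * g b :=
  summable_of_hasFiniteSupport <| ((univ.image f).finite_toSet.subset
    support_pushforward_subset).subset (support_mul_subset_left _ _)

lemma tsum_sum_pushforward_mul [Fintype γ] {f : α → β × γ} (g : β × γ → ℝ) :
    ∑' b, ∑ c, pushforward f μ (b, c) * g (b, c) = ∑ x, μ x * g (f x) := by
  rw [← tsum_pushforward_mul g, (summable_pushforward_mul g).tsum_prod' fun _ => .of_finite]
  simp_rw [tsum_fintype]

lemma pushforward_comp_apply (g : β → γ) (c : γ) :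
    pushforward (fun x => g (f x)) μ c = ∑ b ∈ univ.image f with g b = c, pushforward f μ b := by
  simp only [pushforward]
  rw [sum_comm]
  refine sum_congr rfl fun x _ => ?_
  rw [sum_ite_eq]
  simp

end Pushforward

section KullbackLeibler

variable {α β γ : Type*}

lemma klDiv_eq_sum_of_support_subset {p r : β → ℝ} {s : Finset β} (h : support p ⊆ s) :
    klDiv p r = ∑ b ∈ s, p b * log (p b / r b) :=
  tsum_eq_sum fun b hb => by rw [notMem_support.mp fun hb' => hb (h hb'), zero_mul]

lemma mul_log_add_sub_le_mul_log_div {p r c : ℝ} (hp : 0 ≤ p) (hr : 0 ≤ r)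
    (hpr : r = 0 → p = 0) (hc : 0 < c) : p * log c + (p - r * c) ≤ p * log (p / r) := by
  rcases hp.eq_or_lt with rfl | hp
  · simp only [zero_mul, zero_sub, zero_add, neg_nonpos]
    positivity
  have hr : 0 < r := hr.lt_of_ne fun h => hp.ne' (hpr h.symm)
  have key := Real.one_sub_inv_le_log_of_pos (div_pos (div_pos hp hr) hc)
  rw [log_div (div_pos hp hr).ne' hc.ne'] at key
  have : p * (1 - (p / r / c)⁻¹) = p - r * c := by field_simp
  nlinarith [mul_le_mul_of_nonneg_left key hp.le]

/-- The log-sum inequality. -/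
lemma sum_mul_log_sum_div_sum_le {s : Finset α} {p r : α → ℝ} (hp : ∀ a ∈ s, 0 ≤ p a)
    (hr : ∀ a ∈ s, 0 ≤ r a) (hpr : ∀ a ∈ s, r a = 0 → p a = 0) :
    (∑ a ∈ s, p a) * log ((∑ a ∈ s, p a) / ∑ a ∈ s, r a) ≤
      ∑ a ∈ s, p a * log (p a / r a) := by
  rcases (sum_nonneg hp).eq_or_lt with hP | hP
  · rw [← hP, zero_mul]
    refine sum_nonneg fun a ha => ?_
    rw [(sum_eq_zero_iff_of_nonneg hp).mp hP.symm a ha, zero_mul]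
  have hR : 0 < ∑ a ∈ s, r a := (sum_nonneg hr).lt_of_ne fun hR => hP.ne' <|
    sum_eq_zero fun a ha => hpr a ha ((sum_eq_zero_iff_of_nonneg hr).mp hR.symm a ha)
  have hsum := sum_le_sum fun a ha =>
    mul_log_add_sub_le_mul_log_div (hp a ha) (hr a ha) (hpr a ha) (div_pos hP hR)
  rw [sum_add_distrib, sum_sub_distrib, ← sum_mul, ← sum_mul, mul_div_cancel₀ _ hR.ne',
    sub_self, add_zero] at hsum
  exact hsum

variable [Fintype α] {f : α → β} {P Q : α → ℝ}

lemma klDiv_pushforward : klDiv (pushforward f P) (pushforward f Q) =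
    ∑ x, P x * log (pushforward f P (f x) / pushforward f Q (f x)) :=
  tsum_pushforward_mul _

/-- The data-processing inequality. -/
lemma klDiv_pushforward_comp_le (g : β → γ) (hP : ∀ x, 0 ≤ P x) (hQ : ∀ x, 0 ≤ Q x)
    (hac : ∀ x, Q x = 0 → P x = 0) :
    klDiv (pushforward (fun x => g (f x)) P) (pushforward (fun x => g (f x)) Q) ≤
      klDiv (pushforward f P) (pushforward f Q) := by
  have himage : univ.image (fun x => g (f x)) = (univ.image f).image g := by
    rw [image_image]; rfl
  rw [klDiv_eq_sum_of_support_subset (himage ▸ support_pushforward_subset),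
    klDiv_eq_sum_of_support_subset support_pushforward_subset,
    ← sum_fiberwise_of_maps_to fun b hb => mem_image_of_mem g hb]
  refine sum_le_sum fun c _ => ?_
  simp only [pushforward_comp_apply]
  exact sum_mul_log_sum_div_sum_le (fun b _ => pushforward_nonneg hP b)
    (fun b _ => pushforward_nonneg hQ b) fun b _ => pushforward_eq_zero_of_absCont hQ hac

/-- Chain rule; the first summand is the mutual information of `f` and `g` under `P`. -/
lemma klDiv_pushforward_prod_eq {g : α → γ} (hP : ∀ x, 0 ≤ P x) (hQ : ∀ x, 0 ≤ Q x)
    (hac : ∀ x, Q x = 0 → P x = 0)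
    (hindep : ∀ x, pushforward (fun y => (f y, g y)) Q (f x, g x) =
      pushforward g P (g x) * pushforward f Q (f x)) :
    klDiv (pushforward (fun x => (f x, g x)) P) (pushforward (fun x => (f x, g x)) Q) =
      ∑ x, P x * log (pushforward (fun y => (f y, g y)) P (f x, g x) /
        (pushforward g P (g x) * pushforward f P (f x))) +
      klDiv (pushforward f P) (pushforward f Q) := by
  rw [klDiv_pushforward, klDiv_pushforward, ← sum_add_distrib]
  refine sum_congr rfl fun x _ => ?_
  rcases (hP x).eq_or_lt with hPx | hPx
  · simp [← hPx]
  have hQx : 0 < Q x := (hQ x).lt_of_ne fun h => hPx.ne' (hac x h.symm)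
  have hJ := hPx.trans_le (le_pushforward_apply (f := fun y => (f y, g y)) hP x)
  have hg := hPx.trans_le (le_pushforward_apply (f := g) hP x)
  have hfP := hPx.trans_le (le_pushforward_apply (f := f) hP x)
  have hfQ := hQx.trans_le (le_pushforward_apply (f := f) hQ x)
  rw [hindep, ← mul_add, log_div hJ.ne' (by positivity), log_div hJ.ne' (by positivity),
    log_div hfP.ne' hfQ.ne', log_mul hg.ne' hfQ.ne', log_mul hg.ne' hfP.ne']
  ring

end KullbackLeibler

lemma prod_apply_update_mul {ι 𝒳 : Type*} [Fintype ι] [DecidableEq ι] (m : ι → 𝒳 → ℝ)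
    (x : ι → 𝒳) (i : ι) (b : 𝒳) :
    (∏ j, m j (update x i b j)) * m i (x i) = (∏ j, m j (x j)) * m i b := by
  simp_rw [apply_update m x i b]
  rw [prod_update_of_mem (mem_univ i),
    prod_eq_mul_prod_sdiff_singleton_of_mem (mem_univ i) fun j => m j (x j)]
  ring

/-- Under `Q`, the `i`-th coordinate is independent of every event not depending on it.
The proof exchanges `x i` with an independent copy `b ∼ m`. -/
lemma sum_ite_apply_eq_and {ι 𝒳 : Type*} [Fintype ι] [DecidableEq ι] [Fintype 𝒳]
    {Q : (ι → 𝒳) → ℝ} {m : 𝒳 → ℝ} (i : ι) (hm : ∑ b, m b = 1)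
    (hQ : ∀ x b, Q (update x i b) * m (x i) = Q x * m b)
    {E : (ι → 𝒳) → Prop} [DecidablePred E] (hE : ∀ x b, E (update x i b) ↔ E x) (a : 𝒳) :
    ∑ x, (if x i = a ∧ E x then Q x else 0) = m a * ∑ x, if E x then Q x else 0 := by
  let swap : (ι → 𝒳) × 𝒳 ≃ (ι → 𝒳) × 𝒳 :=
    (show Involutive fun p : (ι → 𝒳) × 𝒳 => (update p.1 i p.2, p.1 i) by
      rintro ⟨x, b⟩; simp).toPerm
  calc ∑ x, (if x i = a ∧ E x then Q x else 0)
      = ∑ p : (ι → 𝒳) × 𝒳, if p.1 i = a ∧ E p.1 then Q p.1 * m p.2 else 0 := by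
        rw [Fintype.sum_prod_type]
        refine sum_congr rfl fun x _ => ?_
        split_ifs <;> simp [← mul_sum, hm]
    _ = ∑ p : (ι → 𝒳) × 𝒳, if p.2 = a ∧ E p.1 then Q p.1 * m p.2 else 0 := by
        refine Fintype.sum_equiv swap _ _ fun p => ?_
        simp [swap, hE, hQ]
    _ = m a * ∑ x, if E x then Q x else 0 := by
        rw [Fintype.sum_prod_type, mul_sum]
        refine sum_congr rfl fun x _ => ?_
        by_cases hx : E x <;> simp [hx, mul_comm]

section Streaming

variable {𝒳 : Type*} {q : ℕ} (A : ℕ → List Bool → 𝒳 → List Bool)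

lemma streamRun_congr {x y : Fin q → 𝒳} {k : ℕ} (h : ∀ j : Fin q, j.1 < k → x j = y j) :
    streamRun A x k = streamRun A y k := by
  induction k with
  | zero => rfl
  | succ k ih =>
    simp only [streamRun, ih fun j hj => h j (by omega)]
    split_ifs with hk
    · rw [h ⟨k, hk⟩ (by simp)]
    · rfl

lemma streamRun_succ (x : Fin q → 𝒳) (i : Fin q) :
    streamRun A x (i + 1) = A (i + 1) (streamRun A x i) (x i) := by
  simp [streamRun]

lemma streamRun_update (x : Fin q → 𝒳) (i : Fin q) (b : 𝒳) :
    streamRun A (update x i b) i = streamRun A x i :=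
  streamRun_congr A fun _ hj => update_of_ne (Fin.ne_of_lt hj) b x

variable [Fintype 𝒳] {A} {P Q : (Fin q → 𝒳) → ℝ}

lemma outDist_eq_pushforward (μ : (Fin q → 𝒳) → ℝ) :
    outDist A μ = pushforward (fun x => streamRun A x q) μ := by
  ext σ
  unfold outDist pushforward
  congr! 2

lemma margX_eq_pushforward (μ : (Fin q → 𝒳) → ℝ) (i : Fin q) :
    margX μ i = pushforward (fun x => x i) μ := rfl

lemma margS_eq_pushforward (μ : (Fin q → 𝒳) → ℝ) (i : Fin q) :
    margS A μ i = pushforward (fun x => streamRun A x i) μ := by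
  ext σ
  unfold margS pushforward
  congr! 2

lemma jointXS_eq_pushforward (μ : (Fin q → 𝒳) → ℝ) (i : Fin q) (a : 𝒳) (σ : List Bool) :
    jointXS A μ i a σ = pushforward (fun x => (streamRun A x i, x i)) μ (σ, a) := by
  simp only [jointXS, pushforward, Prod.ext_iff, and_comm]

lemma jointXS_le_margS (hP : ∀ x, 0 ≤ P x) (i : Fin q) (a : 𝒳) (σ : List Bool) :
    jointXS A P i a σ ≤ margS A P i σ :=
  sum_le_sum fun x _ => by split_ifs <;> simp_all

lemma condDiv_eq_miXS (hP : ∀ x, 0 ≤ P x) (i : Fin q) :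
    condDiv A P i = miXS A P i := by
  refine tsum_congr fun σ => ?_
  by_cases hσ : margS A P i σ = 0
  · have hJ (a : 𝒳) : jointXS A P i a σ = 0 :=
      le_antisymm (hσ ▸ jointXS_le_margS hP i a σ)
        (by rw [jointXS_eq_pushforward]; exact pushforward_nonneg hP _)
    simp [hσ, hJ]
  · rw [mul_sum]
    refine sum_congr rfl fun a _ => ?_
    rw [← mul_assoc, mul_div_cancel₀ _ hσ, div_div, mul_comm (margS A P i σ)]

lemma miXS_eq_sum (i : Fin q) :
    miXS A P i = ∑ x, P x *
      log (pushforward (fun y => (streamRun A y i, y i)) P (streamRun A x i, x i) /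
        (pushforward (fun y => y i) P (x i) *
          pushforward (fun y => streamRun A y i) P (streamRun A x i))) := by
  simp only [miXS, jointXS_eq_pushforward, margX_eq_pushforward, margS_eq_pushforward]
  exact tsum_sum_pushforward_mul fun p => log (pushforward _ P p /
    (pushforward (fun y => y i) P p.2 * pushforward (fun y => streamRun A y i) P p.1))

lemma jointXS_eq_margX_mul_margS (hQsum : ∑ x, Q x = 1)
    (hprod : ∀ x : Fin q → 𝒳, Q x = ∏ i : Fin q, margX Q i (x i)) (i : Fin q) (a : 𝒳)
    (σ : List Bool) : jointXS A Q i a σ = margX Q i a * margS A Q i σ := by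
  have hm : ∑ b, margX Q i b = 1 := by rw [margX_eq_pushforward, sum_pushforward, hQsum]
  have hQ (x : Fin q → 𝒳) (b : 𝒳) : Q (update x i b) * margX Q i (x i) = Q x * margX Q i b := by
    rw [hprod, hprod x, prod_apply_update_mul]
  have := sum_ite_apply_eq_and i hm hQ (E := fun x => streamRun A x i = σ)
    (fun x b => by rw [streamRun_update]) a
  simpa [jointXS, margS] using this

lemma klDiv_streamRun_succ_le (hP : ∀ x, 0 ≤ P x) (hQ : ∀ x, 0 ≤ Q x) (hQsum : ∑ x, Q x = 1)
    (hmarg : ∀ (i : Fin q) (a : 𝒳), margX P i a = margX Q i a)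
    (hprod : ∀ x : Fin q → 𝒳, Q x = ∏ i : Fin q, margX Q i (x i))
    (hac : ∀ x, Q x = 0 → P x = 0) (i : Fin q) :
    klDiv (pushforward (fun x => streamRun A x (i + 1)) P)
        (pushforward (fun x => streamRun A x (i + 1)) Q) ≤
      klDiv (pushforward (fun x => streamRun A x i) P) (pushforward (fun x => streamRun A x i) Q) +
        miXS A P i := by
  have hindep (x : Fin q → 𝒳) :
      pushforward (fun y => (streamRun A y i, y i)) Q (streamRun A x i, x i) =
        pushforward (fun y => y i) P (x i) *
          pushforward (fun y => streamRun A y i) Q (streamRun A x i) := by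
    rw [← jointXS_eq_pushforward, jointXS_eq_margX_mul_margS hQsum hprod, ← hmarg,
      margX_eq_pushforward, margS_eq_pushforward]
  simp_rw [streamRun_succ A _ i]
  calc _ ≤ klDiv (pushforward (fun x => (streamRun A x i, x i)) P)
        (pushforward (fun x => (streamRun A x i, x i)) Q) :=
        klDiv_pushforward_comp_le (fun p => A (i + 1) p.1 p.2) hP hQ hac
    _ = _ := by rw [klDiv_pushforward_prod_eq hP hQ hac hindep, miXS_eq_sum, add_comm]

lemma klDiv_streamRun_le (hP : ∀ x, 0 ≤ P x) (hPsum : ∑ x, P x = 1)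
    (hQ : ∀ x, 0 ≤ Q x) (hQsum : ∑ x, Q x = 1)
    (hmarg : ∀ (i : Fin q) (a : 𝒳), margX P i a = margX Q i a)
    (hprod : ∀ x : Fin q → 𝒳, Q x = ∏ i : Fin q, margX Q i (x i))
    (hac : ∀ x, Q x = 0 → P x = 0) {k : ℕ} (hk : k ≤ q) :
    klDiv (pushforward (fun x => streamRun A x k) P) (pushforward (fun x => streamRun A x k) Q) ≤
      ∑ i : Fin k, miXS A P (Fin.castLE hk i) := by
  induction k with
  | zero => simp [klDiv_pushforward, pushforward, streamRun, hPsum, hQsum]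
  | succ k ih =>
    rw [Fin.sum_univ_castSucc]
    simp only [Fin.castLE_castSucc]
    exact (klDiv_streamRun_succ_le hP hQ hQsum hmarg hprod hac ⟨k, hk⟩).trans
      (add_le_add_left (ih _) _)

end Streaming

/-- Let `P` and `Q` be probability distributions on `𝒳^q` with equal coordinate
marginals, where `Q` is a product distribution and `P ≪ Q`.  Then for any
streaming algorithm `A`:
`D_KL(P_A ‖ Q_A) ≤ Σ_{i=1}^q D_KL(P_{X_i|Σ_{i-1}} ‖ P_{X_i} | P_{Σ_{i-1}})
 = Σ_{i=1}^q I(X_i; Σ_{i-1})`. -/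
theorem stmt_3 {𝒳 : Type*} [Fintype 𝒳] {q : ℕ}
    (P Q : (Fin q → 𝒳) → ℝ)
    (hPnn : ∀ x, 0 ≤ P x) (hPsum : ∑ x, P x = 1)
    (hQnn : ∀ x, 0 ≤ Q x) (hQsum : ∑ x, Q x = 1)
    (hmarg : ∀ (i : Fin q) (a : 𝒳), margX P i a = margX Q i a)
    (hprod : ∀ x : Fin q → 𝒳, Q x = ∏ i : Fin q, margX Q i (x i))
    (hac : ∀ x, Q x = 0 → P x = 0)
    (A : ℕ → List Bool → 𝒳 → List Bool) :
    klDiv (outDist A P) (outDist A Q) ≤ ∑ i : Fin q, condDiv A P i ∧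
      ∑ i : Fin q, condDiv A P i = ∑ i : Fin q, miXS A P i := by
  have hcond : ∑ i : Fin q, condDiv A P i = ∑ i : Fin q, miXS A P i :=
    sum_congr rfl fun i _ => condDiv_eq_miXS hPnn i
  refine ⟨?_, hcond⟩
  rw [hcond, outDist_eq_pushforward, outDist_eq_pushforward]
  simpa using klDiv_streamRun_le hPnn hPsum hQnn hQsum hmarg hprod hac le_rfl
end

section
/- The function φ defined by φ(t) = f(h₂⁻¹(t)) for t ∈ [0, log 2], where f(y) = −(1−y) log(1−y), is nondecreasing on [0, log 2]. -/
/-!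
On `[0, 1/2]` the binary entropy is continuous and strictly increasing from `0` to `log 2`, so any
left inverse of it is monotone on `[0, log 2]` with values in `[0, 1/2]`. Since
`f(y) = negMulLog (1 - y)` and `negMulLog` decreases on `[e⁻¹, ∞)`, `f` increases on
`(-∞, 1 - e⁻¹] ⊇ [0, 1/2]`, and `φ` is a composition of two monotone maps.
-/

/-- The binary entropy function (natural logarithm). -/
noncomputable def binEnt (x : ℝ) : ℝ := -(x * Real.log x) - (1 - x) * Real.log (1 - x)

/-- The function `f(y) = -(1-y) log(1-y)`. -/
noncomputable def fFun (y : ℝ) : ℝ := -((1 - y) * Real.log (1 - y))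

open Set Real

theorem StrictMonoOn.monotoneOn_of_leftInvOn {α β : Type*} [LinearOrder α] [Preorder β]
    {f : α → β} {g : β → α} {s : Set α} {t : Set β} (hf : StrictMonoOn f s)
    (hg : LeftInvOn g f s) (hst : SurjOn f s t) : MonotoneOn g t := by
  rintro _ hx _ hy hxy
  obtain ⟨x, hxs, rfl⟩ := hst hx
  obtain ⟨y, hys, rfl⟩ := hst hy
  rw [hg hxs, hg hys]
  exact (hf.le_iff_le hxs hys).1 hxy

theorem Real.strictAntiOn_negMulLog : StrictAntiOn negMulLog (Ici (exp (-1))) := by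
  refine strictAntiOn_of_deriv_neg (convex_Ici _) continuous_negMulLog.continuousOn ?_
  intro x hx
  rw [interior_Ici, mem_Ioi] at hx
  rw [deriv_negMulLog ((exp_pos _).trans hx).ne']
  have : -1 < log x := by simpa using log_lt_log (exp_pos _) hx
  linarith

theorem binEnt_eq_binEntropy : binEnt = binEntropy := by
  ext x
  simp only [binEnt, binEntropy_eq_negMulLog_add_negMulLog_one_sub, negMulLog]
  ring

theorem binEnt_strictMonoOn : StrictMonoOn binEnt (Icc 0 (1 / 2)) := by
  simpa [binEnt_eq_binEntropy] using binEntropy_strictMonoOn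

theorem binEnt_surjOn : SurjOn binEnt (Icc 0 (1 / 2)) (Icc 0 (log 2)) := by
  have := intermediate_value_Icc (by norm_num : (0 : ℝ) ≤ 2⁻¹) binEntropy_continuous.continuousOn
  rwa [binEntropy_zero, binEntropy_two_inv, ← one_div, ← binEnt_eq_binEntropy] at this

theorem fFun_eq_negMulLog_one_sub (y : ℝ) : fFun y = negMulLog (1 - y) := by
  simp only [fFun, negMulLog]
  ring

theorem fFun_monotoneOn : MonotoneOn fFun (Iic (1 - exp (-1))) := by
  intro x hx y hy hxy
  simp only [fFun_eq_negMulLog_one_sub]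
  refine strictAntiOn_negMulLog.antitoneOn ?_ ?_ (by linarith) <;>
    simp only [mem_Ici, mem_Iic] at * <;> linarith

theorem Icc_zero_half_subset_Iic : Icc (0 : ℝ) (1 / 2) ⊆ Iic (1 - exp (-1)) := by
  have : exp (-1) ≤ 1 / 2 := by
    rw [exp_neg, one_div]
    exact inv_anti₀ two_pos (by linarith [add_one_le_exp 1])
  exact fun x hx => by simp only [mem_Iic]; linarith [hx.2]

/-- For any function `h2inv` that inverts the binary entropy function restricted to
`[0, 1/2]` (i.e. `h₂⁻¹`), the function `φ(t) = f(h₂⁻¹(t))` is nondecreasing on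
`[0, log 2]`. -/
theorem stmt_12 (h2inv : ℝ → ℝ)
    (hinv : ∀ x ∈ Set.Icc (0 : ℝ) (1 / 2), h2inv (binEnt x) = x) :
    MonotoneOn (fun t => fFun (h2inv t)) (Set.Icc (0 : ℝ) (Real.log 2)) :=
  (fFun_monotoneOn.mono Icc_zero_half_subset_Iic).comp
    (binEnt_strictMonoOn.monotoneOn_of_leftInvOn hinv binEnt_surjOn)
    (LeftInvOn.mapsTo hinv binEnt_surjOn)
end

section
/- The inverse binary entropy function h₂⁻¹ : [0, log 2] → [0, 1/2], i.e., the inverse of the binary entropy h₂(x) = −x log x − (1−x) log(1−x) restricted to [0, 1/2], is convex on [0, log 2]. -/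
lemma binEnt_eq (x : ℝ) : binEnt x = Real.binEntropy x := by
  simp [binEnt, Real.binEntropy, Real.log_inv]; ring

lemma binEnt_surj : ∀ y ∈ Set.Icc (0 : ℝ) (Real.log 2), ∃ x ∈ Set.Icc (0 : ℝ) (1/2),
    Real.binEntropy x = y := by
  intro y hy
  have h : Set.Icc (Real.binEntropy 0) (Real.binEntropy (1/2)) ⊆
      Real.binEntropy '' Set.Icc (0:ℝ) (1/2) :=
    intermediate_value_Icc (by norm_num) Real.binEntropy_continuous.continuousOn
  have : y ∈ Real.binEntropy '' Set.Icc (0:ℝ) (1/2) := by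
    apply h
    simpa [Real.binEntropy_zero, show (1/2 : ℝ) = 2⁻¹ by norm_num,
      Real.binEntropy_two_inv] using hy
  obtain ⟨x, hx, hxy⟩ := this
  exact ⟨x, hx, hxy⟩

/-- Any function `h2inv : ℝ → ℝ` that inverts the binary entropy function restricted
to `[0, 1/2]` (i.e. the inverse binary entropy function `h₂⁻¹ : [0, log 2] → [0, 1/2]`)
is convex on `[0, log 2]`. -/
theorem stmt_17 (h2inv : ℝ → ℝ)
    (hinv : ∀ x ∈ Set.Icc (0 : ℝ) (1 / 2), h2inv (binEnt x) = x) :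
    ConvexOn ℝ (Set.Icc (0 : ℝ) (Real.log 2)) h2inv := by
  have hinv' : ∀ x ∈ Set.Icc (0 : ℝ) (1 / 2), h2inv (Real.binEntropy x) = x := by
    intro x hx; rw [← binEnt_eq]; exact hinv x hx
  refine ⟨convex_Icc _ _, ?_⟩
  intro y₁ hy₁ y₂ hy₂ a b ha hb hab
  obtain ⟨x₁, hx₁, hx₁y⟩ := binEnt_surj y₁ hy₁
  obtain ⟨x₂, hx₂, hx₂y⟩ := binEnt_surj y₂ hy₂
  set x := a * x₁ + b * x₂ with hx_def
  have hxmem : x ∈ Set.Icc (0:ℝ) (1/2) :=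
    (convex_Icc (0:ℝ) (1/2)) hx₁ hx₂ ha hb hab
  have hconc : a * y₁ + b * y₂ ≤ Real.binEntropy x := by
    have := Real.strictConcave_binEntropy.concaveOn.2
      (Set.Icc_subset_Icc_right (by norm_num) hx₁)
      (Set.Icc_subset_Icc_right (by norm_num) hx₂) ha hb hab
    simpa [smul_eq_mul, hx₁y, hx₂y] using this
  have hz0 : (0:ℝ) ≤ a * y₁ + b * y₂ :=
    add_nonneg (mul_nonneg ha hy₁.1) (mul_nonneg hb hy₂.1)
  have h : Set.Icc (Real.binEntropy 0) (Real.binEntropy x) ⊆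
      Real.binEntropy '' Set.Icc (0:ℝ) x :=
    intermediate_value_Icc hxmem.1 Real.binEntropy_continuous.continuousOn
  obtain ⟨x', hx', hx'z⟩ := h (by
    rw [Real.binEntropy_zero]; exact ⟨hz0, hconc⟩)
  have hx'mem : x' ∈ Set.Icc (0:ℝ) (1/2) := ⟨hx'.1, hx'.2.trans hxmem.2⟩
  have : h2inv (a * y₁ + b * y₂) = x' := by rw [← hx'z]; exact hinv' x' hx'mem
  calc h2inv (a • y₁ + b • y₂) = x' := by simpa using this
    _ ≤ x := hx'.2
    _ = a • h2inv y₁ + b • h2inv y₂ := by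
        rw [hx_def, ← hinv' x₁ hx₁, ← hinv' x₂ hx₂, hx₁y, hx₂y]; simp
end
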